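/- arXiv:math-ph/0507005 — 3 statements merged into one kernel-verified Lean document; each statement's English description precedes it below -/
import Mathlib

section
/- Let α > 0 and 0 < γ < 1, and let g : ℝ → ℝ be a bounded, non-constant differentiable function satisfying the first-order equation α g'(ξ) = sin g(ξ) + γ for all ξ ∈ ℝ (the travelling-wave equation for velocity v = 1). Then g is strictly monotone, the limits L₋ := lim_{ξ→−∞} g(ξ) and L₊ := lim_{ξ→+∞} g(ξ) exist and satisfy sin L₋ = −γ = sin L₊, and moreover L₋ ≡ −arcsin γ (mod 2π) and L₊ ≡ π + arcsin γ (mod 2π). -/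
/-! Since `u ↦ (sin u + γ) / α` is Lipschitz, a solution through a zero of `sin + γ` is
constant; so along a non-constant solution `g'` never vanishes and `g` is strictly monotone.
Being bounded, `g` has limits at `±∞`, and these are zeros of `sin + γ`, since otherwise `g'`
would stay away from `0`. The sign of the linearisation decides which zeros occur: `g` moves away
from `L₋` and towards `L₊`, which forces `cos L₋ ≥ 0 ≥ cos L₊`, and `cos` does not vanish there
because `|γ| < 1`. -/

open Real Filter Topology

open Set

section AutonomousODE

variable {f g g' : ℝ → ℝ} {L : ℝ}

theorem eq_const_of_hasDerivAt_comp_of_apply_eq_zero {K : NNReal} (hf : LipschitzWith K f)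
    (hg : ∀ t, HasDerivAt g (f (g t)) t) {t₀ : ℝ} (h₀ : f (g t₀) = 0) :
    g = fun _ => g t₀ :=
  ODE_solution_unique_univ (v := fun _ => f) (s := fun _ => univ) (t₀ := t₀)
    (fun _ => hf.lipschitzOnWith) (fun t => ⟨hg t, trivial⟩)
    (fun t => ⟨by simpa [h₀] using hasDerivAt_const t (g t₀), trivial⟩) rfl

theorem hasDerivAt_comp_neg_of_hasDerivAt_comp (hg : ∀ t, HasDerivAt g (f (g t)) t) (t : ℝ) :
    HasDerivAt (fun s => g (-s)) (-f (g (-t))) t := by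
  simpa [Function.comp_def] using (hg (-t)).comp t (hasDerivAt_neg t)

theorem eq_zero_of_tendsto_atTop_of_tendsto_deriv {c : ℝ} (hg : ∀ t, HasDerivAt g (g' t) t)
    (hL : Tendsto g atTop (𝓝 L)) (hc : Tendsto g' atTop (𝓝 c)) : c = 0 := by
  choose θ hθ hslope using fun t : ℝ => exists_hasDerivAt_eq_slope g g' (lt_add_one t)
    (fun x _ => (hg x).continuousAt.continuousWithinAt) (fun x _ => hg x)
  have hθ_top : Tendsto θ atTop atTop := tendsto_atTop_mono (fun t => (hθ t).1.le) tendsto_id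
  have hincr : Tendsto (fun t => (g (t + 1) - g t) / (t + 1 - t)) atTop (𝓝 0) := by
    simpa using (hL.comp (tendsto_atTop_add_const_right _ 1 tendsto_id)).sub hL
  exact tendsto_nhds_unique (hc.comp hθ_top) (hincr.congr fun t => (hslope t).symm)

theorem apply_eq_zero_of_tendsto_atTop (hg : ∀ t, HasDerivAt g (f (g t)) t)
    (hf : ContinuousAt f L) (hL : Tendsto g atTop (𝓝 L)) : f L = 0 :=
  eq_zero_of_tendsto_atTop_of_tendsto_deriv hg hL (hf.tendsto.comp hL)

theorem apply_eq_zero_of_tendsto_atBot (hg : ∀ t, HasDerivAt g (f (g t)) t)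
    (hf : ContinuousAt f L) (hL : Tendsto g atBot (𝓝 L)) : f L = 0 :=
  neg_eq_zero.1 <| apply_eq_zero_of_tendsto_atTop (f := -f)
    (hasDerivAt_comp_neg_of_hasDerivAt_comp hg) hf.neg (hL.comp tendsto_neg_atTop_atBot)

theorem forall_pos_or_forall_neg_of_hasDerivAt_ne_zero (hg : ∀ t, HasDerivAt g (g' t) t)
    (hne : ∀ t, g' t ≠ 0) : (∀ t, 0 < g' t) ∨ ∀ t, g' t < 0 := by
  simpa [or_comm] using hasDerivWithinAt_forall_lt_or_forall_gt_of_forall_ne convex_univ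
    (fun t _ => (hg t).hasDerivWithinAt) (fun t _ => hne t)

theorem strictMono_or_strictAnti_of_hasDerivAt_ne_zero (hg : ∀ t, HasDerivAt g (g' t) t)
    (hne : ∀ t, g' t ≠ 0) : StrictMono g ∨ StrictAnti g :=
  (forall_pos_or_forall_neg_of_hasDerivAt_ne_zero hg hne).imp
    (strictMono_of_hasDerivAt_pos hg) (strictAnti_of_hasDerivAt_neg hg)

theorem mul_sub_pos_of_tendsto_atBot (hg : ∀ t, HasDerivAt g (g' t) t) (hne : ∀ t, g' t ≠ 0)
    (hL : Tendsto g atBot (𝓝 L)) (t : ℝ) : 0 < g' t * (g t - L) := by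
  rcases forall_pos_or_forall_neg_of_hasDerivAt_ne_zero hg hne with hpos | hneg
  · have hmono := strictMono_of_hasDerivAt_pos hg hpos
    have := hmono.monotone.le_of_tendsto hL (t - 1)
    exact mul_pos (hpos t) (by linarith [hmono (sub_one_lt t)])
  · have hanti := strictAnti_of_hasDerivAt_neg hg hneg
    have := hanti.antitone.ge_of_tendsto hL (t - 1)
    exact mul_pos_of_neg_of_neg (hneg t) (by linarith [hanti (sub_one_lt t)])

theorem HasDerivAt.nonneg_of_tendsto_of_mul_sub_pos {l : Filter ℝ} [l.NeBot] {d : ℝ}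
    (hf : HasDerivAt f d L) (hfL : f L = 0) (hgL : Tendsto g l (𝓝 L))
    (hpos : ∀ t, 0 < f (g t) * (g t - L)) : 0 ≤ d := by
  have hgL' : Tendsto g l (𝓝[≠] L) :=
    tendsto_nhdsWithin_of_tendsto_nhds_of_eventually_within g hgL <| .of_forall fun t h =>
      (hpos t).ne' (by rw [h, sub_self, mul_zero])
  refine ge_of_tendsto ((hasDerivAt_iff_tendsto_slope.1 hf).comp hgL') (.of_forall fun t => ?_)
  rw [Function.comp_apply, slope_def_field, hfL, sub_zero]
  exact (div_pos_iff.2 (mul_pos_iff.1 (hpos t))).le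

theorem HasDerivAt.nonneg_of_tendsto_atBot {d : ℝ} (hf : HasDerivAt f d L)
    (hg : ∀ t, HasDerivAt g (f (g t)) t) (hne : ∀ t, f (g t) ≠ 0)
    (hL : Tendsto g atBot (𝓝 L)) : 0 ≤ d :=
  hf.nonneg_of_tendsto_of_mul_sub_pos (apply_eq_zero_of_tendsto_atBot hg hf.continuousAt hL) hL
    (mul_sub_pos_of_tendsto_atBot hg hne hL)

theorem HasDerivAt.nonpos_of_tendsto_atTop {d : ℝ} (hf : HasDerivAt f d L)
    (hg : ∀ t, HasDerivAt g (f (g t)) t) (hne : ∀ t, f (g t) ≠ 0)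
    (hL : Tendsto g atTop (𝓝 L)) : d ≤ 0 :=
  neg_nonneg.1 <| hf.neg.nonneg_of_tendsto_atBot (hasDerivAt_comp_neg_of_hasDerivAt_comp hg)
    (fun t => neg_ne_zero.2 (hne (-t))) (hL.comp tendsto_neg_atBot_atTop)

end AutonomousODE

theorem exists_tendsto_atBot_and_exists_tendsto_atTop {g : ℝ → ℝ}
    (hg : Monotone g ∨ Antitone g) (hbdd : ∃ M, ∀ t, |g t| ≤ M) :
    (∃ L, Tendsto g atBot (𝓝 L)) ∧ ∃ L, Tendsto g atTop (𝓝 L) := by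
  obtain ⟨M, hM⟩ := hbdd
  have hA : BddAbove (range g) := ⟨M, by rintro _ ⟨t, rfl⟩; exact (abs_le.1 (hM t)).2⟩
  have hB : BddBelow (range g) := ⟨-M, by rintro _ ⟨t, rfl⟩; exact (abs_le.1 (hM t)).1⟩
  rcases hg with hmono | hanti
  · exact ⟨⟨_, tendsto_atBot_ciInf hmono hB⟩, _, tendsto_atTop_ciSup hmono hA⟩
  · exact ⟨⟨_, tendsto_atBot_ciSup hanti hA⟩, _, tendsto_atTop_ciInf hanti hB⟩

namespace Real

theorem exists_int_eq_add_of_sin_eq_of_cos_eq {x y : ℝ} (hs : sin x = sin y)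
    (hc : cos x = cos y) : ∃ k : ℤ, x = y + 2 * k * π := by
  obtain ⟨k, hk⟩ := Angle.angle_eq_iff_two_pi_dvd_sub.1 (Angle.cos_sin_inj hc hs)
  exact ⟨k, by linarith⟩

theorem exists_int_eq_neg_arcsin_of_sin_eq_neg {γ L : ℝ} (hs : sin L = -γ) (hc : 0 < cos L) :
    ∃ k : ℤ, L = -arcsin γ + 2 * k * π := by
  have hγ : γ = -sin L := by linarith
  refine exists_int_eq_add_of_sin_eq_of_cos_eq ?_ ?_
  · rw [sin_neg, sin_arcsin (by linarith [sin_le_one L]) (by linarith [neg_one_le_sin L]),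
      hs]
  · rw [cos_neg, cos_arcsin, hγ, neg_sq, ← cos_sq', sqrt_sq hc.le]

theorem exists_int_eq_pi_add_arcsin_of_sin_eq_neg {γ L : ℝ} (hs : sin L = -γ) (hc : cos L < 0) :
    ∃ k : ℤ, L = π + arcsin γ + 2 * k * π := by
  have hγ : γ = -sin L := by linarith
  refine exists_int_eq_add_of_sin_eq_of_cos_eq ?_ ?_
  · rw [add_comm, sin_add_pi,
      sin_arcsin (by linarith [sin_le_one L]) (by linarith [neg_one_le_sin L]), hs]
  · rw [add_comm, cos_add_pi, cos_arcsin, hγ, neg_sq, ← cos_sq', sqrt_sq_eq_abs, abs_of_neg hc,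
      neg_neg]

end Real

section TravellingWave

variable {α γ : ℝ}

noncomputable def travellingWaveField (α γ : ℝ) (u : ℝ) : ℝ := (sin u + γ) / α

theorem lipschitzWith_travellingWaveField :
    LipschitzWith ‖α⁻¹‖₊ (travellingWaveField α γ) := by
  unfold travellingWaveField
  simpa [Function.comp_def, div_eq_inv_mul] using
    (lipschitzWith_smul α⁻¹).comp ((isometry_add_right γ).lipschitz.comp lipschitzWith_sin)

theorem hasDerivAt_travellingWaveField (u : ℝ) :
    HasDerivAt (travellingWaveField α γ) (cos u / α) u :=
  ((hasDerivAt_sin u).add_const γ).div_const α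

theorem travellingWaveField_eq_zero_iff (hα : α ≠ 0) {u : ℝ} :
    travellingWaveField α γ u = 0 ↔ sin u = -γ := by
  rw [travellingWaveField, div_eq_zero_iff, or_iff_left hα, add_eq_zero_iff_eq_neg]

variable {g : ℝ → ℝ} {L : ℝ}

theorem sin_eq_neg_and_cos_nonneg_of_tendsto_atBot (hα : 0 < α)
    (hg : ∀ t, HasDerivAt g (travellingWaveField α γ (g t)) t)
    (hne : ∀ t, travellingWaveField α γ (g t) ≠ 0) (hL : Tendsto g atBot (𝓝 L)) :
    sin L = -γ ∧ 0 ≤ cos L := by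
  have hf := hasDerivAt_travellingWaveField (α := α) (γ := γ) L
  refine ⟨(travellingWaveField_eq_zero_iff hα.ne').1
    (apply_eq_zero_of_tendsto_atBot hg hf.continuousAt hL), ?_⟩
  simpa [le_div_iff₀ hα] using hf.nonneg_of_tendsto_atBot hg hne hL

theorem sin_eq_neg_and_cos_nonpos_of_tendsto_atTop (hα : 0 < α)
    (hg : ∀ t, HasDerivAt g (travellingWaveField α γ (g t)) t)
    (hne : ∀ t, travellingWaveField α γ (g t) ≠ 0) (hL : Tendsto g atTop (𝓝 L)) :
    sin L = -γ ∧ cos L ≤ 0 := by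
  have hf := hasDerivAt_travellingWaveField (α := α) (γ := γ) L
  refine ⟨(travellingWaveField_eq_zero_iff hα.ne').1
    (apply_eq_zero_of_tendsto_atTop hg hf.continuousAt hL), ?_⟩
  simpa [div_le_iff₀ hα] using hf.nonpos_of_tendsto_atTop hg hne hL

end TravellingWave

/-- For `α > 0`, `0 < γ < 1`, a bounded non-constant differentiable solution of
`α g' = sin g + γ` (the travelling-wave equation for `v = 1`) is strictly
monotone, has limits `L₋`, `L₊` at `∓∞` with `sin L₋ = -γ = sin L₊`, and
`L₋ ≡ -arcsin γ (mod 2π)`, `L₊ ≡ π + arcsin γ (mod 2π)`. -/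
theorem firstOrder_travellingWave_v_eq_one
    (α γ : ℝ) (hα : 0 < α) (hγ0 : 0 < γ) (hγ1 : γ < 1)
    (g : ℝ → ℝ) (hdiff : Differentiable ℝ g)
    (hbound : ∃ M : ℝ, ∀ ξ : ℝ, |g ξ| ≤ M)
    (hnc : ∃ a b : ℝ, g a ≠ g b)
    (heq : ∀ ξ : ℝ, α * deriv g ξ = Real.sin (g ξ) + γ) :
    (StrictMono g ∨ StrictAnti g)
    ∧ ∃ Lm Lp : ℝ,
        Tendsto g atBot (𝓝 Lm) ∧ Tendsto g atTop (𝓝 Lp)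
        ∧ Real.sin Lm = -γ ∧ Real.sin Lp = -γ
        ∧ (∃ k : ℤ, Lm = -Real.arcsin γ + 2 * k * π)
        ∧ (∃ k : ℤ, Lp = π + Real.arcsin γ + 2 * k * π) := by
  set f := travellingWaveField α γ
  have hg (t : ℝ) : HasDerivAt g (f (g t)) t := by
    show HasDerivAt g ((sin (g t) + γ) / α) t
    have h : deriv g t = (sin (g t) + γ) / α := by
      rw [eq_div_iff hα.ne', mul_comm, heq t]
    exact h ▸ (hdiff t).hasDerivAt
  have hne (t : ℝ) : f (g t) ≠ 0 := fun h => by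
    obtain ⟨a, b, hab⟩ := hnc
    have hconst :=
      eq_const_of_hasDerivAt_comp_of_apply_eq_zero lipschitzWith_travellingWaveField hg h
    exact hab (by rw [hconst])
  have hmono := strictMono_or_strictAnti_of_hasDerivAt_ne_zero hg hne
  obtain ⟨⟨Lm, hLm⟩, Lp, hLp⟩ := exists_tendsto_atBot_and_exists_tendsto_atTop
    (hmono.imp StrictMono.monotone StrictAnti.antitone) hbound
  obtain ⟨hsLm, hcLm⟩ := sin_eq_neg_and_cos_nonneg_of_tendsto_atBot hα hg hne hLm
  obtain ⟨hsLp, hcLp⟩ := sin_eq_neg_and_cos_nonpos_of_tendsto_atTop hα hg hne hLp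
  have hcos {L : ℝ} (hs : sin L = -γ) : cos L ≠ 0 := fun h => by
    rcases cos_eq_zero_iff_sin_eq.1 h with h | h <;> linarith
  exact ⟨hmono, Lm, Lp, hLm, hLp, hsLm, hsLp,
    exists_int_eq_neg_arcsin_of_sin_eq_neg hsLm (hcLm.lt_of_ne' (hcos hsLm)),
    exists_int_eq_pi_add_arcsin_of_sin_eq_neg hsLp (hcLp.lt_of_ne (hcos hsLp))⟩
end

section
/- Let 0 < γ < 1, μ ≥ 0, and let g : ℝ → ℝ be a C² solution of the reduced travelling-wave ODE g'' + μ g' + sin g − γ = 0. Suppose there exist ξ̄ ∈ ℝ and k ∈ ℤ with g(ξ̄) = π − arcsin γ + 2kπ (a local maximum point of U) and g'(ξ̄) < 0. Then g'(ξ) < g'(ξ̄) < 0 for all ξ < ξ̄, and g(ξ) → +∞ and g'(ξ) → −∞ as ξ → −∞. -/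
/-!
Along a solution the energy `E = g'²/2 + U(g)`, with `U(x) = -(cos x + γ x)` the washboard
potential, is non-increasing since `E' = -μ g'²`. Going backwards from `ξ̄`, as long as `g' < 0`
on `(ξ, ξ̄]` the solution lies above the maximum point `g(ξ̄)`, where `U` is below its value at
`g(ξ̄)`; so `E(ξ) ≥ E(ξ̄)` forces `g'(ξ)² > g'(ξ̄)²`, i.e. `g'(ξ) < g'(ξ̄)`, and `g'` can never
return to `0`. Hence `g' < g'(ξ̄) < 0` on `(-∞, ξ̄)`, so `g` grows at least linearly as `ξ → -∞`,
and then the energy bound `g'² ≥ 2γ g + const` makes `g'` blow up as well.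
-/

open Real Filter Topology Set

noncomputable section

def washboardPotential (γ x : ℝ) : ℝ := -(cos x + γ * x)

def reducedODEEnergy (γ : ℝ) (g : ℝ → ℝ) (ξ : ℝ) : ℝ :=
  deriv g ξ ^ 2 / 2 + washboardPotential γ (g ξ)

end

lemma sin_eq_and_cos_nonpos_of_eq_pi_sub_arcsin {γ x : ℝ} (hγ₀ : -1 ≤ γ) (hγ₁ : γ ≤ 1) (k : ℤ)
    (hx : x = π - arcsin γ + 2 * k * π) : sin x = γ ∧ cos x ≤ 0 := by
  have hx' : x = π - arcsin γ + k * (2 * π) := by rw [hx]; ring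
  rw [hx', sin_add_int_mul_two_pi, sin_pi_sub, sin_arcsin hγ₀ hγ₁, cos_add_int_mul_two_pi,
    cos_pi_sub, cos_arcsin, neg_nonpos]
  exact ⟨rfl, sqrt_nonneg _⟩

/-- `U(p) - U(p + s) = γ (s - sin s) - cos p (1 - cos s)`, and `sin s < s` for `s > 0`. -/
lemma washboardPotential_lt_of_lt {γ p x : ℝ} (hγ : 0 < γ) (hsin : sin p = γ) (hcos : cos p ≤ 0)
    (hpx : p < x) : washboardPotential γ x < washboardPotential γ p := by
  obtain ⟨s, hs, rfl⟩ : ∃ s, 0 < s ∧ x = p + s := ⟨x - p, sub_pos.mpr hpx, by ring⟩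
  have hsin_lt : sin s < s := sin_lt hs
  have hcos_le : cos s ≤ 1 := cos_le_one s
  unfold washboardPotential
  rw [cos_add, hsin]
  nlinarith [mul_nonneg_of_nonpos_of_nonpos hcos (sub_nonpos.mpr hcos_le)]

lemma Continuous.forall_lt_of_Ioc_neg {φ : ℝ → ℝ} (hφ : Continuous φ) {b c : ℝ} (hc : c ≤ 0)
    (hb : φ b < 0) (hstep : ∀ ξ < b, (∀ t ∈ Ioc ξ b, φ t < 0) → φ ξ < c) :
    ∀ ξ < b, φ ξ < c := by
  have hneg : ∀ ξ ≤ b, φ ξ < 0 := by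
    intro ξ₀ hξ₀
    by_contra! h₀
    -- the last point of `[ξ₀, b]` where `φ ≥ 0`
    obtain ⟨ξ₁, ⟨⟨hξ₀₁, hξ₁b⟩, hφξ₁⟩, hgreatest⟩ :=
      (isCompact_Icc.inter_right (isClosed_le continuous_const hφ)).exists_isGreatest
        ⟨ξ₀, ⟨le_rfl, hξ₀⟩, h₀⟩
    have hξ₁ : ξ₁ < b := lt_of_le_of_ne hξ₁b (by rintro rfl; exact hb.not_ge hφξ₁)
    have hafter : ∀ t ∈ Ioc ξ₁ b, φ t < 0 := fun t ht ↦ by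
      by_contra! h
      exact (hgreatest ⟨⟨hξ₀₁.trans ht.1.le, ht.2⟩, h⟩).not_gt ht.1
    exact (hstep ξ₁ hξ₁ hafter).not_ge (hc.trans hφξ₁)
  exact fun ξ hξ ↦ hstep ξ hξ fun t ht ↦ hneg t ht.2

lemma tendsto_atBot_atTop_of_deriv_le_neg {f : ℝ → ℝ} (hf : Differentiable ℝ f) {b c : ℝ}
    (hc : c < 0) (hderiv : ∀ ξ < b, deriv f ξ ≤ c) : Tendsto f atBot atTop := by
  have hlinear : ∀ ξ ≤ b, f b - c * b + c * ξ ≤ f ξ := fun ξ hξ ↦ by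
    have := (convex_Iic b).image_sub_le_mul_sub_of_deriv_le hf.continuous.continuousOn
      hf.differentiableOn (by simpa using hderiv) ξ hξ b self_mem_Iic hξ
    linarith
  refine tendsto_atTop_mono' atBot ?_ <| tendsto_atTop_add_const_left _ (f b - c * b) <|
    tendsto_id.const_mul_atBot_of_neg hc
  filter_upwards [eventually_le_atBot b] with ξ hξ using hlinear ξ hξ

lemma tendsto_atBot_of_sq_tendsto_atTop {α : Type*} {l : Filter α} {f : α → ℝ}
    (hsq : Tendsto (fun x ↦ f x ^ 2) l atTop) (hf : ∀ᶠ x in l, f x ≤ 0) : Tendsto f l atBot := by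
  refine (tendsto_neg_atTop_atBot.comp (tendsto_sqrt_atTop.comp hsq)).congr' ?_
  filter_upwards [hf] with x hx
  simp [sqrt_sq_eq_abs, abs_of_nonpos hx]

section Energy

variable {μ γ : ℝ} {g : ℝ → ℝ} (hg : Differentiable ℝ g) (hg' : Differentiable ℝ (deriv g))
  (heq : ∀ ξ : ℝ, deriv (deriv g) ξ + μ * deriv g ξ + sin (g ξ) - γ = 0)
include hg hg' heq

lemma hasDerivAt_reducedODEEnergy (ξ : ℝ) :
    HasDerivAt (reducedODEEnergy γ g) (-μ * deriv g ξ ^ 2) ξ := by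
  have hg'' : HasDerivAt (deriv g) (γ - sin (g ξ) - μ * deriv g ξ) ξ :=
    (hg' ξ).hasDerivAt.congr_deriv (by linarith [heq ξ])
  have hE : reducedODEEnergy γ g = fun t ↦ deriv g t ^ 2 / 2 - (cos (g t) + γ * g t) := by
    ext t
    rw [reducedODEEnergy, washboardPotential, sub_eq_add_neg]
  rw [hE]
  refine (((hg''.pow 2).div_const 2).sub
    ((hg ξ).hasDerivAt.cos.add ((hg ξ).hasDerivAt.const_mul γ))).congr_deriv ?_
  simp only [Nat.cast_ofNat, Nat.add_one_sub_one, pow_one]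
  ring

lemma antitone_reducedODEEnergy (hμ : 0 ≤ μ) : Antitone (reducedODEEnergy γ g) :=
  antitone_of_hasDerivAt_nonpos (hasDerivAt_reducedODEEnergy hg hg' heq) fun _ ↦
    mul_nonpos_of_nonpos_of_nonneg (neg_nonpos.mpr hμ) (sq_nonneg _)

lemma deriv_lt_of_forall_Ioc_deriv_neg (hμ : 0 ≤ μ) (hγ : 0 < γ) {b : ℝ} (hsin : sin (g b) = γ)
    (hcos : cos (g b) ≤ 0) {ξ : ℝ} (hξ : ξ < b) (hneg : ∀ t ∈ Ioc ξ b, deriv g t < 0) :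
    deriv g ξ < deriv g b := by
  have hgξ : g b < g ξ := by
    refine strictAntiOn_of_deriv_neg (convex_Icc ξ b) hg.continuous.continuousOn ?_
      (left_mem_Icc.mpr hξ.le) (right_mem_Icc.mpr hξ.le) hξ
    rw [interior_Icc]
    exact fun t ht ↦ hneg t (Ioo_subset_Ioc_self ht)
  have hU := washboardPotential_lt_of_lt hγ hsin hcos hgξ
  have hE : reducedODEEnergy γ g b ≤ reducedODEEnergy γ g ξ :=
    antitone_reducedODEEnergy hg hg' heq hμ hξ.le
  have hξ_nonpos : deriv g ξ ≤ 0 := by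
    have : Icc ξ b ⊆ {t | deriv g t ≤ 0} := by
      rw [← closure_Ioc hξ.ne]
      exact (isClosed_le hg'.continuous continuous_const).closure_subset_iff.mpr
        fun t ht ↦ (hneg t ht).le
    exact this (left_mem_Icc.mpr hξ.le)
  unfold reducedODEEnergy at hE
  nlinarith [hneg b (right_mem_Ioc.mpr hξ)]

end Energy

/-- For a C² solution of the reduced travelling-wave ODE
`g'' + μ g' + sin g - γ = 0` (with `μ ≥ 0`, `0 < γ < 1`) that at some `ξ̄`
sits at a local maximum `π - arcsin γ + 2kπ` of the washboard potential with
`g'(ξ̄) < 0`, one has `g'(ξ) < g'(ξ̄) < 0` for all `ξ < ξ̄`, and `g(ξ) → +∞`,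
`g'(ξ) → -∞` as `ξ → -∞`. -/
theorem reducedODE_leftward_at_maximum_blowup
    (μ γ : ℝ) (hμ : 0 ≤ μ) (hγ0 : 0 < γ) (hγ1 : γ < 1)
    (g : ℝ → ℝ) (hg : ContDiff ℝ 2 g)
    (heq : ∀ ξ : ℝ,
        deriv (deriv g) ξ + μ * deriv g ξ + Real.sin (g ξ) - γ = 0)
    (ξb : ℝ) (k : ℤ) (hval : g ξb = π - Real.arcsin γ + 2 * k * π)
    (hder : deriv g ξb < 0) :
    (∀ ξ : ℝ, ξ < ξb → deriv g ξ < deriv g ξb)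
    ∧ Tendsto g atBot atTop
    ∧ Tendsto (deriv g) atBot atBot := by
  obtain ⟨hg₁, -, hg₂⟩ := contDiff_succ_iff_deriv.mp (show ContDiff ℝ (1 + 1) g from hg)
  replace hg₂ : Differentiable ℝ (deriv g) := hg₂.differentiable one_ne_zero
  obtain ⟨hsin, hcos⟩ := sin_eq_and_cos_nonpos_of_eq_pi_sub_arcsin (by linarith) hγ1.le k hval
  have hlt : ∀ ξ < ξb, deriv g ξ < deriv g ξb :=
    hg₂.continuous.forall_lt_of_Ioc_neg hder.le hder fun ξ hξ ↦
      deriv_lt_of_forall_Ioc_deriv_neg hg₁ hg₂ heq hμ hγ0 hsin hcos hξ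
  have hgtop : Tendsto g atBot atTop :=
    tendsto_atBot_atTop_of_deriv_le_neg hg₁ hder fun ξ hξ ↦ (hlt ξ hξ).le
  have henergy : ∀ ξ ≤ ξb, 2 * γ * g ξ + 2 * (reducedODEEnergy γ g ξb - 1) ≤ deriv g ξ ^ 2 :=
    fun ξ hξ ↦ by
      have := antitone_reducedODEEnergy hg₁ hg₂ heq hμ hξ
      simp only [reducedODEEnergy, washboardPotential] at this ⊢
      linarith [neg_one_le_cos (g ξ)]
  have hlower : Tendsto (fun ξ ↦ 2 * γ * g ξ + 2 * (reducedODEEnergy γ g ξb - 1)) atBot atTop :=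
    tendsto_atTop_add_const_right _ _ (hgtop.const_mul_atTop (by linarith))
  refine ⟨hlt, hgtop, tendsto_atBot_of_sq_tendsto_atTop ?_ ?_⟩
  · refine tendsto_atTop_mono' atBot ?_ hlower
    filter_upwards [eventually_le_atBot ξb] with ξ hξ using henergy ξ hξ
  · filter_upwards [eventually_lt_atBot ξb] with ξ hξ using ((hlt ξ hξ).trans hder).le
end

section
/- Let μ > 0, 0 ≤ γ < 1, and let g : ℝ → ℝ be a bounded C² solution of the reduced travelling-wave ODE g'' + μ g' + sin g − γ = 0. Then g'(ξ) → 0 as ξ → +∞ and g'(ξ) → 0 as ξ → −∞; moreover ∫_{−∞}^{+∞} g'(ξ)² dξ < ∞. -/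
/-!
The energy `E = g'² / 2 - cos g - γ g` satisfies `E' = -μ g'²`, so it is nonincreasing. A bounded
`g` has `|g'| ≤ 2M` somewhere in every unit interval, which together with monotonicity bounds `E`
on all of `ℝ`; hence `μ ∫ g'² ≤ sup E - inf E < ∞`. The bound on `E` also bounds `g'`, and then the
equation bounds `g''`, so `g'` is uniformly continuous. A uniformly continuous function whose
square is integrable tends to zero at `±∞` (Barbălat's argument: if `|g'| ≥ ε` at points going to
infinity, then `g'² ≥ ε² / 4` on windows of fixed length there, contradicting integrability).
-/

open Real Filter Topology MeasureTheory

theorem UniformContinuous.tendsto_zero_of_tendsto_intervalIntegral_sq {v : ℝ → ℝ}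
    (hv : UniformContinuous v) {l : Filter ℝ}
    (hl : ∀ δ > 0, Tendsto (fun ξ => ∫ x in ξ..ξ + δ, v x ^ 2) l (𝓝 0)) :
    Tendsto v l (𝓝 0) := by
  rw [Metric.tendsto_nhds]
  intro ε hε
  by_contra hfar
  have hfreq : ∃ᶠ ξ in l, ε ≤ |v ξ| := by
    simpa [Filter.not_eventually, Real.dist_eq] using hfar
  obtain ⟨δ, hδ, hclose⟩ := Metric.uniformContinuous_iff.mp hv (ε / 2) (half_pos hε)
  have hsmall : ∀ᶠ ξ in l, ∫ x in ξ..ξ + δ / 2, v x ^ 2 < δ / 2 * (ε / 2) ^ 2 :=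
    (hl _ (half_pos hδ)).eventually (gt_mem_nhds (by positivity))
  obtain ⟨ξ, hvξ, hξ⟩ := (hfreq.and_eventually hsmall).exists
  have hlarge : ∀ t ∈ Set.Icc ξ (ξ + δ / 2), (ε / 2) ^ 2 ≤ v t ^ 2 := by
    intro t ht
    have hvt : |v ξ - v t| < ε / 2 := by
      rw [← Real.dist_eq]
      refine hclose ?_
      rw [Real.dist_eq, abs_sub_lt_iff]
      constructor <;> linarith [ht.1, ht.2]
    have hgap := abs_sub_abs_le_abs_sub (v ξ) (v t)
    rw [← sq_abs (v t)]
    exact pow_le_pow_left₀ (by positivity) (by linarith) 2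
  have hwindow := intervalIntegral.integral_mono_on (by linarith)
    (intervalIntegrable_const (μ := volume)) ((hv.continuous.pow 2).intervalIntegrable _ _) hlarge
  simp only [intervalIntegral.integral_const, add_sub_cancel_left, smul_eq_mul,
    Pi.pow_apply] at hwindow
  linarith

theorem MeasureTheory.Integrable.tendsto_intervalIntegral_add_atTop {f : ℝ → ℝ}
    (hf : Integrable f) (δ : ℝ) :
    Tendsto (fun ξ => ∫ x in ξ..ξ + δ, f x) atTop (𝓝 0) := by
  have htail := intervalIntegral_tendsto_integral_Ioi 0 hf.integrableOn tendsto_id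
  have hshift := htail.comp (tendsto_atTop_add_const_right atTop δ tendsto_id)
  refine (sub_self (∫ x in Set.Ioi 0, f x) ▸ hshift.sub htail).congr fun ξ => ?_
  exact intervalIntegral.integral_interval_sub_left hf.intervalIntegrable
    hf.intervalIntegrable

theorem MeasureTheory.Integrable.tendsto_intervalIntegral_add_atBot {f : ℝ → ℝ}
    (hf : Integrable f) (δ : ℝ) :
    Tendsto (fun ξ => ∫ x in ξ..ξ + δ, f x) atBot (𝓝 0) := by
  have htail := intervalIntegral_tendsto_integral_Iic 0 hf.integrableOn tendsto_id
  have hshift := htail.comp (tendsto_atBot_add_const_right atBot δ tendsto_id)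
  refine (sub_self (∫ x in Set.Iic 0, f x) ▸ htail.sub hshift).congr fun ξ => ?_
  exact sub_eq_of_eq_add (intervalIntegral.integral_add_adjacent_intervals
    hf.intervalIntegrable hf.intervalIntegrable).symm

theorem integrable_of_hasDerivAt_of_nonneg_of_abs_le {F f : ℝ → ℝ} {C : ℝ}
    (hF : ∀ x, HasDerivAt F (f x) x) (hf : ∀ x, 0 ≤ f x) (hC : ∀ x, |F x| ≤ C) :
    Integrable f := by
  have hcont : Continuous F := continuous_iff_continuousAt.mpr fun x => (hF x).continuousAt
  have hIoc : ∀ a b, IntegrableOn f (Set.Ioc a b) := fun a b =>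
    intervalIntegral.integrableOn_deriv_of_nonneg hcont.continuousOn (fun x _ => hF x)
      fun x _ => hf x
  refine integrable_of_intervalIntegral_norm_bounded (2 * C) (fun i => hIoc (-i) i)
    tendsto_neg_atTop_atBot tendsto_id (Eventually.of_forall fun b => ?_)
  simp only [Real.norm_of_nonneg (hf _)]
  rw [intervalIntegral.integral_eq_sub_of_hasDerivAt (fun x _ => hF x) ⟨hIoc _ _, hIoc _ _⟩]
  linarith [abs_le.mp (hC b), abs_le.mp (hC (-b))]

theorem uniformContinuous_of_abs_deriv_le {f : ℝ → ℝ} {C : ℝ} (hf : Differentiable ℝ f)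
    (hC : ∀ x, |deriv f x| ≤ C) : UniformContinuous f :=
  (lipschitzWith_of_nnnorm_deriv_le hf (C := C.toNNReal) fun x => by
    rw [← NNReal.coe_le_coe, coe_nnnorm, Real.norm_eq_abs]
    exact (hC x).trans (Real.le_coe_toNNReal C)).uniformContinuous

theorem abs_cos_add_mul_le {x M : ℝ} (γ : ℝ) (hx : |x| ≤ M) : |cos x + γ * x| ≤ 1 + |γ| * M :=
  calc |cos x + γ * x| ≤ |cos x| + |γ| * |x| := by rw [← abs_mul]; exact abs_add_le _ _
    _ ≤ 1 + |γ| * M := by gcongr; exact abs_cos_le_one x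

/-- The mechanical energy `g'² / 2 + U(g)` in the washboard potential `U(g) = -(cos g + γ g)`. -/
noncomputable def washboardEnergy (γ : ℝ) (g : ℝ → ℝ) (ξ : ℝ) : ℝ :=
  deriv g ξ ^ 2 / 2 - (cos (g ξ) + γ * g ξ)

structure IsReducedODESolution (μ γ : ℝ) (g : ℝ → ℝ) : Prop where
  contDiff : ContDiff ℝ 2 g
  ode : ∀ ξ, deriv (deriv g) ξ + μ * deriv g ξ + sin (g ξ) - γ = 0

namespace IsReducedODESolution

variable {μ γ M : ℝ} {g : ℝ → ℝ} (h : IsReducedODESolution μ γ g)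
include h

theorem differentiable : Differentiable ℝ g :=
  h.contDiff.differentiable (by norm_num)

theorem differentiable_deriv : Differentiable ℝ (deriv g) :=
  (contDiff_succ_iff_deriv.mp h.contDiff).2.2.differentiable one_ne_zero

theorem deriv_deriv_eq (ξ : ℝ) : deriv (deriv g) ξ = γ - sin (g ξ) - μ * deriv g ξ := by
  linarith [h.ode ξ]

theorem hasDerivAt_washboardEnergy (ξ : ℝ) :
    HasDerivAt (washboardEnergy γ g) (-(μ * deriv g ξ ^ 2)) ξ := by
  have hg := (h.differentiable ξ).hasDerivAt
  have hv := (h.differentiable_deriv ξ).hasDerivAt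
  refine ((hv.pow 2).div_const 2 |>.sub (((hasDerivAt_cos _).comp ξ hg).add
    (hg.const_mul γ))).congr_deriv ?_
  rw [h.deriv_deriv_eq]
  push_cast
  ring

theorem antitone_washboardEnergy (hμ : 0 ≤ μ) : Antitone (washboardEnergy γ g) :=
  antitone_of_deriv_nonpos (fun ξ => (h.hasDerivAt_washboardEnergy ξ).differentiableAt)
    fun ξ => (h.hasDerivAt_washboardEnergy ξ).deriv ▸ neg_nonpos.mpr (by positivity)

theorem washboardEnergy_le (hμ : 0 ≤ μ) (hM : ∀ ξ, |g ξ| ≤ M) (ξ : ℝ) :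
    washboardEnergy γ g ξ ≤ 2 * M ^ 2 + (1 + |γ| * M) := by
  obtain ⟨c, hc, hslope⟩ := exists_deriv_eq_slope g (sub_one_lt ξ)
    h.differentiable.continuous.continuousOn fun x _ => (h.differentiable x).differentiableWithinAt
  have hvc : |deriv g c| ≤ 2 * M := by
    rw [hslope, sub_sub_cancel, div_one]
    linarith [abs_sub (g ξ) (g (ξ - 1)), hM ξ, hM (ξ - 1)]
  have hpot := abs_le.mp (abs_cos_add_mul_le γ (hM c))
  have hvc2 : deriv g c ^ 2 ≤ (2 * M) ^ 2 := by
    rw [← sq_abs]; exact pow_le_pow_left₀ (abs_nonneg _) hvc 2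
  calc washboardEnergy γ g ξ ≤ washboardEnergy γ g c := h.antitone_washboardEnergy hμ hc.2.le
    _ ≤ 2 * M ^ 2 + (1 + |γ| * M) := by unfold washboardEnergy; nlinarith

theorem abs_washboardEnergy_le (hμ : 0 ≤ μ) (hM : ∀ ξ, |g ξ| ≤ M) (ξ : ℝ) :
    |washboardEnergy γ g ξ| ≤ 2 * M ^ 2 + (1 + |γ| * M) := by
  have hpot := abs_le.mp (abs_cos_add_mul_le γ (hM ξ))
  have : 0 ≤ deriv g ξ ^ 2 / 2 := by positivity
  refine abs_le.mpr ⟨?_, h.washboardEnergy_le hμ hM ξ⟩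
  unfold washboardEnergy
  nlinarith [sq_nonneg M]

theorem sq_deriv_le (hμ : 0 ≤ μ) (hM : ∀ ξ, |g ξ| ≤ M) (ξ : ℝ) :
    deriv g ξ ^ 2 ≤ 4 * (M ^ 2 + (1 + |γ| * M)) := by
  have hpot := abs_le.mp (abs_cos_add_mul_le γ (hM ξ))
  have := h.washboardEnergy_le hμ hM ξ
  unfold washboardEnergy at this
  linarith

theorem uniformContinuous_deriv (hμ : 0 ≤ μ) (hM : ∀ ξ, |g ξ| ≤ M) :
    UniformContinuous (deriv g) := by
  set K := √(4 * (M ^ 2 + (1 + |γ| * M)))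
  have hK : ∀ ξ, |deriv g ξ| ≤ K := fun ξ => Real.abs_le_sqrt (h.sq_deriv_le hμ hM ξ)
  refine uniformContinuous_of_abs_deriv_le h.differentiable_deriv (C := |γ| + 1 + μ * K)
    fun ξ => ?_
  rw [h.deriv_deriv_eq]
  calc |γ - sin (g ξ) - μ * deriv g ξ| ≤ |γ| + |sin (g ξ)| + μ * |deriv g ξ| := by
        rw [← abs_of_nonneg hμ, ← abs_mul, abs_of_nonneg hμ]
        exact (abs_sub _ _).trans (add_le_add_left (abs_sub _ _) _)
    _ ≤ |γ| + 1 + μ * K := by gcongr; exacts [abs_sin_le_one _, hK ξ]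

theorem integrable_deriv_sq (hμ : 0 < μ) (hM : ∀ ξ, |g ξ| ≤ M) :
    Integrable fun ξ => deriv g ξ ^ 2 := by
  refine integrable_of_hasDerivAt_of_nonneg_of_abs_le
    (F := fun ξ => -washboardEnergy γ g ξ / μ) (C := (2 * M ^ 2 + (1 + |γ| * M)) / μ)
    (fun ξ => ?_) (fun ξ => sq_nonneg _) fun ξ => ?_
  · refine ((h.hasDerivAt_washboardEnergy ξ).neg.div_const μ).congr_deriv ?_
    field_simp
  · rw [abs_div, abs_neg, abs_of_pos hμ]
    gcongr
    exact h.abs_washboardEnergy_le hμ.le hM ξ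

end IsReducedODESolution

theorem reducedODE_bounded_solution_derivative_vanishes_general
    (μ γ : ℝ) (hμ : 0 < μ)
    (g : ℝ → ℝ) (hg : ContDiff ℝ 2 g)
    (hbound : ∃ M : ℝ, ∀ ξ : ℝ, |g ξ| ≤ M)
    (heq : ∀ ξ : ℝ,
        deriv (deriv g) ξ + μ * deriv g ξ + Real.sin (g ξ) - γ = 0) :
    Tendsto (deriv g) atTop (𝓝 0)
    ∧ Tendsto (deriv g) atBot (𝓝 0)
    ∧ Integrable (fun ξ : ℝ => (deriv g ξ) ^ 2) := by
  obtain ⟨M, hM⟩ := hbound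
  have hsol : IsReducedODESolution μ γ g := ⟨hg, heq⟩
  have huc := hsol.uniformContinuous_deriv hμ.le hM
  have hint := hsol.integrable_deriv_sq hμ hM
  exact ⟨huc.tendsto_zero_of_tendsto_intervalIntegral_sq fun δ _ =>
      hint.tendsto_intervalIntegral_add_atTop δ,
    huc.tendsto_zero_of_tendsto_intervalIntegral_sq fun δ _ =>
      hint.tendsto_intervalIntegral_add_atBot δ,
    hint⟩

/-- For `μ > 0`, `0 ≤ γ < 1`, a bounded C² solution of the reduced
travelling-wave ODE `g'' + μ g' + sin g - γ = 0` has `g'(ξ) → 0` as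
`ξ → ±∞`, and `∫_{-∞}^{+∞} g'(ξ)² dξ < ∞`. -/
theorem reducedODE_bounded_solution_derivative_vanishes
    (μ γ : ℝ) (hμ : 0 < μ) (hγ0 : 0 ≤ γ) (hγ1 : γ < 1)
    (g : ℝ → ℝ) (hg : ContDiff ℝ 2 g)
    (hbound : ∃ M : ℝ, ∀ ξ : ℝ, |g ξ| ≤ M)
    (heq : ∀ ξ : ℝ,
        deriv (deriv g) ξ + μ * deriv g ξ + Real.sin (g ξ) - γ = 0) :
    Tendsto (deriv g) atTop (𝓝 0)
    ∧ Tendsto (deriv g) atBot (𝓝 0)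
    ∧ Integrable (fun ξ : ℝ => (deriv g ξ) ^ 2) :=
  reducedODE_bounded_solution_derivative_vanishes_general μ γ hμ g hg hbound heq
end
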